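/- Let μ > 0 and q ∈ (0,1]. Let N, V₁, V₂, … be mutually independent random variables, where N has the Poisson distribution with parameter μ and each Vᵢ has the geometric distribution on the positive integers with parameter q, and set S := ∑_{i=1}^{N} Vᵢ (with S := 0 on {N = 0}). Then for every real θ ≥ 0: (i) if θ ≤ μ/q then ℙ(S ≤ θ) ≤ exp(−(√μ − √(θq))²); and (ii) if θ ≥ μ/q then ℙ(S ≥ θ) ≤ exp(−(√(θq) − √μ)²). -/

import Mathlib

/-!
Conditioning on `N` and using independence, `S` has probability generating function
`E[z ^ S] = exp (μ (G z - 1))`, where `G z = q z / (1 - (1 - q) z)` is the generating function of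
the geometric law. Markov's inequality for `z ^ S` gives `ℙ(S ≤ θ) ≤ E[z ^ S] / z ^ θ` when
`z ≤ 1` and `ℙ(S ≥ θ) ≤ E[z ^ S] / z ^ θ` when `z ≥ 1`. Take `z` with `G z = r := √(θq/μ)`;
then `z ≤ 1` exactly when `θ ≤ μ/q`, and `log z ≥ 1 - 1/z = q (r - 1) / r` bounds the exponent
`μ (r - 1) - θ log z` by `μ (r - 1) - μ r (r - 1) = -(√(θq) - √μ)²`.
-/

open MeasureTheory ProbabilityTheory Finset
open scoped ENNReal Nat

noncomputable def geomPgf (q z : ℝ) : ℝ := q * z / (1 - (1 - q) * z)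

noncomputable def geomPgfInv (q r : ℝ) : ℝ := r / (q + (1 - q) * r)

section GeomPgfInv

variable {q r : ℝ}

lemma geomPgfInv_denom_pos (hq0 : 0 < q) (hq1 : q ≤ 1) (hr : 0 ≤ r) : 0 < q + (1 - q) * r := by
  nlinarith

lemma geomPgfInv_nonneg (hq0 : 0 < q) (hq1 : q ≤ 1) (hr : 0 ≤ r) : 0 ≤ geomPgfInv q r :=
  div_nonneg hr (geomPgfInv_denom_pos hq0 hq1 hr).le

lemma geomPgfInv_pos (hq0 : 0 < q) (hq1 : q ≤ 1) (hr : 0 < r) : 0 < geomPgfInv q r :=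
  div_pos hr (geomPgfInv_denom_pos hq0 hq1 hr.le)

lemma one_sub_mul_geomPgfInv (hq0 : 0 < q) (hq1 : q ≤ 1) (hr : 0 ≤ r) :
    1 - (1 - q) * geomPgfInv q r = q / (q + (1 - q) * r) := by
  have := geomPgfInv_denom_pos hq0 hq1 hr
  unfold geomPgfInv
  field_simp
  ring

lemma mul_geomPgfInv_lt_one (hq0 : 0 < q) (hq1 : q ≤ 1) (hr : 0 ≤ r) :
    (1 - q) * geomPgfInv q r < 1 := by
  have := one_sub_mul_geomPgfInv hq0 hq1 hr
  have : 0 < q / (q + (1 - q) * r) := div_pos hq0 (geomPgfInv_denom_pos hq0 hq1 hr)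
  linarith

lemma geomPgf_geomPgfInv (hq0 : 0 < q) (hq1 : q ≤ 1) (hr : 0 ≤ r) :
    geomPgf q (geomPgfInv q r) = r := by
  have hd := geomPgfInv_denom_pos hq0 hq1 hr
  rw [geomPgf, one_sub_mul_geomPgfInv hq0 hq1 hr, geomPgfInv, mul_div_assoc',
    div_div_div_cancel_right₀ hd.ne', mul_div_right_comm, div_self hq0.ne', one_mul]

lemma geomPgfInv_le_one (hq0 : 0 < q) (hq1 : q ≤ 1) (hr : 0 ≤ r) (hr1 : r ≤ 1) :
    geomPgfInv q r ≤ 1 := by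
  rw [geomPgfInv, div_le_one (geomPgfInv_denom_pos hq0 hq1 hr)]
  nlinarith

lemma one_le_geomPgfInv (hq0 : 0 < q) (hq1 : q ≤ 1) (hr1 : 1 ≤ r) : 1 ≤ geomPgfInv q r := by
  rw [geomPgfInv, le_div_iff₀ (geomPgfInv_denom_pos hq0 hq1 (by linarith))]
  nlinarith

lemma one_sub_inv_geomPgfInv (hr : 0 < r) : 1 - (geomPgfInv q r)⁻¹ = q * (r - 1) / r := by
  rw [geomPgfInv, inv_div]
  field_simp
  ring

end GeomPgfInv

lemma exp_mul_geomPgf_sub_one_le {μ q θ : ℝ} (hμ : 0 < μ) (hq0 : 0 < q) (hq1 : q ≤ 1)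
    (hθ : 0 ≤ θ) :
    Real.exp (μ * (geomPgf q (geomPgfInv q √(θ * q / μ)) - 1))
      ≤ Real.exp (-(√(θ * q) - √μ) ^ 2) * geomPgfInv q √(θ * q / μ) ^ θ := by
  set r := √(θ * q / μ) with hr_def
  have hr0 : 0 ≤ r := Real.sqrt_nonneg _
  have hθq : θ * q = μ * r ^ 2 := by
    rw [hr_def, Real.sq_sqrt (by positivity)]
    field_simp
  have hsqrt : √(θ * q) = r * √μ := by
    rw [hθq, Real.sqrt_mul hμ.le, Real.sqrt_sq hr0, mul_comm]
  rw [geomPgf_geomPgfInv hq0 hq1 hr0, hsqrt]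
  rcases hθ.eq_or_lt with rfl | hθ
  · simp [hr_def, Real.sq_sqrt hμ.le]
  set z := geomPgfInv q r
  have hr : 0 < r := Real.sqrt_pos.mpr (by positivity)
  have hz : 0 < z := geomPgfInv_pos hq0 hq1 hr
  -- `log z ≥ 1 - 1/z`, and `θ (1 - 1/z) = μ r (r - 1)` by the choice of `z`
  have hlog : μ * r * (r - 1) ≤ θ * Real.log z := by
    have hlin : θ * (1 - z⁻¹) = μ * r * (r - 1) := by
      rw [one_sub_inv_geomPgfInv hr]
      field_simp
      linear_combination (r - 1) * hθq
    rw [← hlin]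
    exact mul_le_mul_of_nonneg_left (Real.one_sub_inv_le_log_of_pos hz) hθ.le
  rw [Real.rpow_def_of_pos hz, ← Real.exp_add, Real.exp_le_exp]
  nlinarith [Real.sq_sqrt hμ.le]

lemma geomPgfInv_sqrt_rpow_pos {μ q θ : ℝ} (hμ : 0 < μ) (hq0 : 0 < q) (hq1 : q ≤ 1)
    (hθ : 0 ≤ θ) : 0 < geomPgfInv q √(θ * q / μ) ^ θ := by
  rcases hθ.eq_or_lt with rfl | hθ
  · simp -- the base is `0` here, and `0 ^ 0 = 1`
  · exact Real.rpow_pos_of_pos (geomPgfInv_pos hq0 hq1 (Real.sqrt_pos.mpr (by positivity))) θ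

lemma tsum_poisson_mul_pow {μ c : ℝ} (hμ : 0 ≤ μ) (hc : 0 ≤ c) :
    ∑' m : ℕ, ENNReal.ofReal (Real.exp (-μ) * μ ^ m / m !) * ENNReal.ofReal c ^ m
      = ENNReal.ofReal (Real.exp (μ * (c - 1))) := by
  have hterm : ∀ m : ℕ, ENNReal.ofReal (Real.exp (-μ) * μ ^ m / m !) * ENNReal.ofReal c ^ m
      = ENNReal.ofReal (Real.exp (-μ) * ((μ * c) ^ m / m !)) := by
    intro m
    rw [← ENNReal.ofReal_pow hc, ← ENNReal.ofReal_mul (by positivity), mul_pow]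
    ring_nf
  have hexp := (NormedSpace.expSeries_div_hasSum_exp (μ * c)).mul_left (Real.exp (-μ))
  rw [← Real.exp_eq_exp_ℝ, ← Real.exp_add, neg_add_eq_sub, ← mul_sub_one] at hexp
  simp_rw [hterm]
  rw [← ENNReal.ofReal_tsum_of_nonneg (fun m => by positivity) hexp.summable, hexp.tsum_eq]

section

variable {Ω : Type*} [MeasurableSpace Ω] {P : Measure Ω}

lemma measurable_sum_range {N : Ω → ℕ} {V : ℕ → Ω → ℕ}
    (hN : Measurable N) (hV : ∀ i, Measurable (V i)) :
    Measurable fun ω => ∑ i ∈ range (N ω), V i ω :=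
  (measurable_from_prod_countable_right (f := fun p : ℕ × Ω => ∑ i ∈ range p.1, V i p.2)
    fun m => measurable_sum (range m) fun i _ => hV i).comp
    (hN.prodMk measurable_id)

lemma measurableSet_fiber {N : Ω → ℕ} (hN : Measurable N) (m : ℕ) :
    MeasurableSet {ω | N ω = m} :=
  hN (measurableSet_singleton m)

lemma measure_le_of_lintegral_le_mul {f : Ω → ℝ≥0∞} (hf : Measurable f) {A : Set Ω}
    {ε b : ℝ≥0∞} (hε0 : ε ≠ 0) (hε : ε ≠ ∞) (hA : ∀ ω ∈ A, ε ≤ f ω)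
    (hb : ∫⁻ ω, f ω ∂P ≤ b * ε) : P A ≤ b :=
  calc P A ≤ P {ω | ε ≤ f ω} := measure_mono hA
    _ ≤ (∫⁻ ω, f ω ∂P) / ε := meas_ge_le_lintegral_div hf.aemeasurable hε0 hε
    _ ≤ b := ENNReal.div_le_of_le_mul hb

lemma lintegral_eq_tsum_setLIntegral {N : Ω → ℕ} (hN : Measurable N) (h : Ω → ℝ≥0∞) :
    ∫⁻ ω, h ω ∂P = ∑' m, ∫⁻ ω in {ω | N ω = m}, h ω ∂P := by
  rw [← lintegral_iUnion (measurableSet_fiber hN)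
    fun a b hab => Set.disjoint_left.mpr fun ω ha hb => hab (ha.symm.trans hb),
    Set.iUnion_eq_univ_iff.mpr fun ω => ⟨N ω, rfl⟩, setLIntegral_univ]

lemma lintegral_comp_eq_tsum {W : Ω → ℕ} (hW : Measurable W) (g : ℕ → ℝ≥0∞) :
    ∫⁻ ω, g (W ω) ∂P = ∑' k, g k * P {ω | W ω = k} := by
  rw [lintegral_eq_tsum_setLIntegral hW]
  refine tsum_congr fun k => ?_
  rw [setLIntegral_congr_fun (measurableSet_fiber hW k) fun ω (hω : W ω = k) => by rw [hω],
    setLIntegral_const]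

lemma setLIntegral_prod_range_eq {N : Ω → ℕ} {V : ℕ → Ω → ℕ} (hN : Measurable N)
    (hV : ∀ i, Measurable (V i)) (hindep : iIndepFun (fun o : Option ℕ => o.elim N V) P)
    (f : ℕ → ℝ≥0∞) (m : ℕ) :
    ∫⁻ ω in {ω | N ω = m}, ∏ i ∈ range m, f (V i ω) ∂P
      = P {ω | N ω = m} * ∏ i ∈ range m, ∫⁻ ω, f (V i ω) ∂P := by
  let g : Option ℕ → ℕ → ℝ≥0∞ := fun o => o.elim (({m} : Set ℕ).indicator 1) fun _ => f
  have hmeas : ∀ o, Measurable (g o ∘ o.elim N V) := by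
    rintro (_ | i)
    · exact (measurable_of_countable _).comp hN
    · exact (measurable_of_countable _).comp (hV i)
  have key := lintegral_prod_eq_prod_lintegral_of_indepFun (insertNone (range m)) _
    (hindep.comp g fun _ => measurable_of_countable _) hmeas
  simp only [prod_insertNone] at key
  rw [← lintegral_indicator (measurableSet_fiber hN m)]
  convert key using 2
  · ext ω
    by_cases hω : N ω = m <;> simp [g, hω]
  · rw [← lintegral_indicator_one (measurableSet_fiber hN m)]
    rfl
  · rfl

lemma lintegral_prod_range_eq_tsum {N : Ω → ℕ} {V : ℕ → Ω → ℕ} (hN : Measurable N)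
    (hV : ∀ i, Measurable (V i)) (hindep : iIndepFun (fun o : Option ℕ => o.elim N V) P)
    (f : ℕ → ℝ≥0∞) {c : ℝ≥0∞} (hc : ∀ i, ∫⁻ ω, f (V i ω) ∂P = c) :
    ∫⁻ ω, ∏ i ∈ range (N ω), f (V i ω) ∂P = ∑' m, P {ω | N ω = m} * c ^ m := by
  rw [lintegral_eq_tsum_setLIntegral hN]
  refine tsum_congr fun m => ?_
  rw [setLIntegral_congr_fun (measurableSet_fiber hN m) fun ω (hω : N ω = m) => by rw [hω],
    setLIntegral_prod_range_eq hN hV hindep, prod_congr rfl fun i _ => hc i, prod_const,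
    card_range]

lemma tsum_ofReal_pow_succ_mul_geometric {q z : ℝ} (hq0 : 0 ≤ q) (hq1 : q ≤ 1) (hz0 : 0 ≤ z)
    (hz : (1 - q) * z < 1) :
    ∑' k : ℕ, ENNReal.ofReal z ^ (k + 1) * ENNReal.ofReal (q * (1 - q) ^ k)
      = ENNReal.ofReal (geomPgf q z) := by
  have hr : 0 ≤ (1 - q) * z := mul_nonneg (by linarith) hz0
  have hterm : ∀ k : ℕ, ENNReal.ofReal z ^ (k + 1) * ENNReal.ofReal (q * (1 - q) ^ k)
      = ENNReal.ofReal (q * z) * ENNReal.ofReal ((1 - q) * z) ^ k := by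
    intro k
    rw [← ENNReal.ofReal_pow hz0, ← ENNReal.ofReal_pow hr, ← ENNReal.ofReal_mul (by positivity),
      ← ENNReal.ofReal_mul (by positivity), mul_pow]
    ring_nf
  simp_rw [hterm]
  rw [ENNReal.tsum_mul_left, ENNReal.tsum_geometric, ← ENNReal.ofReal_one,
    ← ENNReal.ofReal_sub _ hr, ← ENNReal.ofReal_inv_of_pos (by linarith),
    ← ENNReal.ofReal_mul (by positivity), geomPgf, div_eq_mul_inv]

lemma measure_le_ofReal_of_lintegral_pow_le {S : Ω → ℕ} (hS : Measurable S) {z θ b : ℝ}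
    (hz0 : 0 ≤ z) (hzθ : 0 < z ^ θ) (hb : 0 ≤ b)
    (hpgf : ∫⁻ ω, ENNReal.ofReal z ^ S ω ∂P ≤ ENNReal.ofReal (b * z ^ θ)) {A : Set Ω}
    (hA : ∀ ω ∈ A, z ^ θ ≤ z ^ S ω) : P A ≤ ENNReal.ofReal b := by
  refine measure_le_of_lintegral_le_mul ((measurable_of_countable (ENNReal.ofReal z ^ ·)).comp hS)
    (ENNReal.ofReal_pos.mpr hzθ).ne' ENNReal.ofReal_ne_top (fun ω hω => ?_)
    (by rwa [← ENNReal.ofReal_mul hb])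
  rw [Function.comp_apply, ← ENNReal.ofReal_pow hz0]
  exact ENNReal.ofReal_le_ofReal (hA ω hω)

variable [IsProbabilityMeasure P]

lemma measure_eq_zero_of_geometric {q : ℝ} (hq0 : 0 < q) (hq1 : q ≤ 1) {W : Ω → ℕ}
    (hW : Measurable W)
    (hlaw : ∀ m : ℕ, 1 ≤ m → P {ω | W ω = m} = ENNReal.ofReal (q * (1 - q) ^ (m - 1))) :
    P {ω | W ω = 0} = 0 := by
  have htail : ∑' k : ℕ, P {ω | W ω = k + 1} = 1 := by
    have h := tsum_ofReal_pow_succ_mul_geometric hq0.le hq1 zero_le_one (by linarith)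
    simp only [geomPgf, mul_one, sub_sub_cancel, div_self hq0.ne', ENNReal.ofReal_one] at h
    simpa [hlaw] using h
  have htotal := lintegral_comp_eq_tsum (P := P) hW fun _ => 1
  rw [lintegral_const, measure_univ, tsum_eq_zero_add' ENNReal.summable] at htotal
  simpa [htail] using htotal.symm

lemma lintegral_ofReal_pow_eq_geomPgf {q z : ℝ} (hq0 : 0 < q) (hq1 : q ≤ 1) (hz0 : 0 ≤ z)
    (hz : (1 - q) * z < 1) {W : Ω → ℕ} (hW : Measurable W)
    (hlaw : ∀ m : ℕ, 1 ≤ m → P {ω | W ω = m} = ENNReal.ofReal (q * (1 - q) ^ (m - 1))) :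
    ∫⁻ ω, ENNReal.ofReal z ^ W ω ∂P = ENNReal.ofReal (geomPgf q z) := by
  rw [lintegral_comp_eq_tsum hW fun k => ENNReal.ofReal z ^ k, tsum_eq_zero_add' ENNReal.summable,
    measure_eq_zero_of_geometric hq0 hq1 hW hlaw, mul_zero, zero_add,
    ← tsum_ofReal_pow_succ_mul_geometric hq0.le hq1 hz0 hz]
  refine tsum_congr fun k => ?_
  rw [hlaw (k + 1) k.succ_pos, Nat.add_sub_cancel]

lemma lintegral_ofReal_pow_sum_eq_exp {μ q z : ℝ} (hμ : 0 ≤ μ) (hq0 : 0 < q) (hq1 : q ≤ 1)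
    (hz0 : 0 ≤ z) (hz : (1 - q) * z < 1) {N : Ω → ℕ} {V : ℕ → Ω → ℕ} (hN : Measurable N)
    (hV : ∀ i, Measurable (V i)) (hindep : iIndepFun (fun o : Option ℕ => o.elim N V) P)
    (hNlaw : ∀ m : ℕ, P {ω | N ω = m} = ENNReal.ofReal (Real.exp (-μ) * μ ^ m / m !))
    (hVlaw : ∀ i, ∀ m : ℕ, 1 ≤ m →
      P {ω | V i ω = m} = ENNReal.ofReal (q * (1 - q) ^ (m - 1))) :
    ∫⁻ ω, ENNReal.ofReal z ^ (∑ i ∈ range (N ω), V i ω) ∂P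
      = ENNReal.ofReal (Real.exp (μ * (geomPgf q z - 1))) := by
  simp_rw [← prod_pow_eq_pow_sum]
  rw [lintegral_prod_range_eq_tsum hN hV hindep (fun k => ENNReal.ofReal z ^ k)
    fun i => lintegral_ofReal_pow_eq_geomPgf hq0 hq1 hz0 hz (hV i) (hVlaw i)]
  simp_rw [hNlaw]
  exact tsum_poisson_mul_pow hμ (div_nonneg (by positivity) (by linarith))

end

/-- Tail bounds for the Poisson–Geometric compound distribution
`S = ∑_{i=1}^N Vᵢ`, where `N ~ Poisson(μ)` and the `Vᵢ` are geometric on the positive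
integers with parameter `q`, all mutually independent. -/
theorem statement3 {Ω : Type*} [MeasureSpace Ω] [IsProbabilityMeasure (ℙ : Measure Ω)]
    (μpar q : ℝ) (hμ : 0 < μpar) (hq : q ∈ Set.Ioc (0 : ℝ) 1)
    (N : Ω → ℕ) (V : ℕ → Ω → ℕ)
    (hNmeas : Measurable N) (hVmeas : ∀ i, Measurable (V i))
    (hIndep : iIndepFun
      (fun o : Option ℕ => o.elim N V) ℙ)
    (hN : ∀ m : ℕ, ℙ {ω | N ω = m}
      = ENNReal.ofReal (Real.exp (-μpar) * μpar ^ m / (Nat.factorial m : ℝ)))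
    (hV : ∀ i, ∀ m : ℕ, 1 ≤ m →
      ℙ {ω | V i ω = m} = ENNReal.ofReal (q * (1 - q) ^ (m - 1)))
    (S : Ω → ℕ) (hS : ∀ ω, S ω = ∑ i ∈ Finset.range (N ω), V i ω)
    (θ : ℝ) (hθ : 0 ≤ θ) :
    (θ ≤ μpar / q →
      ℙ {ω | (S ω : ℝ) ≤ θ}
        ≤ ENNReal.ofReal (Real.exp (-(Real.sqrt μpar - Real.sqrt (θ * q)) ^ 2)))
    ∧ (μpar / q ≤ θ →
      ℙ {ω | θ ≤ (S ω : ℝ)}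
        ≤ ENNReal.ofReal (Real.exp (-(Real.sqrt (θ * q) - Real.sqrt μpar) ^ 2))) := by
  obtain ⟨hq0, hq1⟩ := hq
  set r := √(θ * q / μpar)
  set z := geomPgfInv q r
  have hr0 : 0 ≤ r := Real.sqrt_nonneg _
  have hz0 : 0 ≤ z := geomPgfInv_nonneg hq0 hq1 hr0
  have hSmeas : Measurable S := by
    rw [show S = _ from funext hS]
    exact measurable_sum_range hNmeas hVmeas
  have hpgf : ∫⁻ ω, ENNReal.ofReal z ^ S ω ∂ℙ
      = ENNReal.ofReal (Real.exp (μpar * (geomPgf q z - 1))) := by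
    simp_rw [hS]
    exact lintegral_ofReal_pow_sum_eq_exp hμ.le hq0 hq1 hz0 (mul_geomPgfInv_lt_one hq0 hq1 hr0)
      hNmeas hVmeas hIndep hN hV
  have hchernoff : ∀ A : Set Ω, (∀ ω ∈ A, z ^ θ ≤ z ^ S ω) →
      ℙ A ≤ ENNReal.ofReal (Real.exp (-(√(θ * q) - √μpar) ^ 2)) := fun A =>
    measure_le_ofReal_of_lintegral_pow_le hSmeas hz0 (geomPgfInv_sqrt_rpow_pos hμ hq0 hq1 hθ)
      (Real.exp_pos _).le
      (hpgf.trans_le (ENNReal.ofReal_le_ofReal (exp_mul_geomPgf_sub_one_le hμ hq0 hq1 hθ)))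
  refine ⟨fun hθμ => ?_, fun hθμ => ?_⟩
  · have hr1 : r ≤ 1 := Real.sqrt_le_one.mpr ((div_le_one hμ).mpr ((le_div_iff₀ hq0).mp hθμ))
    rw [← neg_sub, neg_sq]
    refine hchernoff _ fun ω (hω : (S ω : ℝ) ≤ θ) => ?_
    rw [← Real.rpow_natCast]
    exact Real.rpow_le_rpow_of_exponent_ge' hz0 (geomPgfInv_le_one hq0 hq1 hr0 hr1)
      (Nat.cast_nonneg _) hω
  · have hr1 : 1 ≤ r := Real.one_le_sqrt.mpr ((one_le_div hμ).mpr ((div_le_iff₀ hq0).mp hθμ))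
    refine hchernoff _ fun ω (hω : θ ≤ (S ω : ℝ)) => ?_
    rw [← Real.rpow_natCast]
    exact Real.rpow_le_rpow_of_exponent_le (one_le_geomPgfInv hq0 hq1 hr1) hω
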